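/- arXiv:1309.1361 — 5 statements merged into one kernel-verified Lean document; each statement's English description precedes it below -/
import Mathlib

section
/- Let a, b be integers with b odd. Then the set {d : ℤ | ∃ a₁₁ a₂₁ a₂₂ : ℤ, 12 ∣ (a₁₁·a + 6·a₂₁·b) ∧ 2 ∣ (a₂₂·b) ∧ a₁₁·a₂₂ = d} equals the set of all integer multiples of 12 / gcd(a, 6) (note gcd(a,6) divides 12, so 12/gcd(a,6) is an exact integer quotient). -/
/-!
Since `b` is odd, `2 ∣ a₂₂ * b` just says `2 ∣ a₂₂`, and `6 * a₂₁ * b` runs through all multiples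
of `6` modulo `12`, so a suitable `a₂₁` exists exactly when `6 ∣ a₁₁ * a`, i.e. when
`6 / gcd(a, 6) ∣ a₁₁`. The degrees are therefore the products of a multiple of `6 / gcd(a, 6)`
with an even number, which are the multiples of `12 / gcd(a, 6)`.
-/

theorem exists_dvd_and_dvd_and_mul_eq_iff {α : Type*} [CommMonoid α] {m n d : α} :
    (∃ x z, m ∣ x ∧ n ∣ z ∧ x * z = d) ↔ m * n ∣ d := by
  constructor
  · rintro ⟨x, z, hx, hz, rfl⟩
    exact mul_dvd_mul hx hz
  · rintro ⟨k, rfl⟩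
    exact ⟨m, n * k, dvd_rfl, dvd_mul_right n k, (mul_assoc m n k).symm⟩

namespace Int

theorem ediv_gcd_dvd_iff_dvd_mul {n : ℤ} (hn : n ≠ 0) (a x : ℤ) :
    n / (Int.gcd a n : ℤ) ∣ x ↔ n ∣ a * x := by
  have hg : (Int.gcd a n : ℤ) ≠ 0 := Int.natCast_ne_zero.mpr (Int.gcd_ne_zero_right hn)
  rw [Int.ediv_dvd_iff_dvd_mul (Int.gcd_dvd_right a n) hg, Int.gcd_comm, Int.coe_gcd]
  exact dvd_gcd_mul_iff_dvd_mul

theorem two_dvd_mul_odd_iff {b : ℤ} (hb : Odd b) (z : ℤ) : 2 ∣ z * b ↔ 2 ∣ z := by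
  rw [← even_iff_two_dvd, ← even_iff_two_dvd, Int.even_mul,
    or_iff_left (Int.not_even_iff_odd.mpr hb)]

theorem exists_two_mul_dvd_add_mul_odd_iff {b : ℤ} (hb : Odd b) (n c : ℤ) :
    (∃ y, 2 * n ∣ c + n * y * b) ↔ n ∣ c := by
  constructor
  · rintro ⟨y, hy⟩
    have hn : n ∣ c + n * y * b := (dvd_mul_left n 2).trans hy
    exact (dvd_add_left ((dvd_mul_right n y).mul_right b)).mp hn
  · rintro ⟨k, rfl⟩
    obtain ⟨m, rfl⟩ := hb
    -- `nk + nk(2m + 1) = 2n · k(m + 1)`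
    exact ⟨k, k * (m + 1), by ring⟩

end Int

theorem degrees_to_product_b_odd (a b : ℤ) (hb : Odd b) :
    {d : ℤ | ∃ a₁₁ a₂₁ a₂₂ : ℤ,
        (12 : ℤ) ∣ (a₁₁ * a + 6 * a₂₁ * b) ∧ (2 : ℤ) ∣ (a₂₂ * b) ∧ a₁₁ * a₂₂ = d}
      = {d : ℤ | ((12 / (Int.gcd a 6 : ℤ))) ∣ d} := by
  have twelve_div : (12 / (Int.gcd a 6 : ℤ)) = 6 / (Int.gcd a 6 : ℤ) * 2 := by
    rw [mul_comm, ← Int.mul_ediv_assoc 2 (Int.gcd_dvd_right a 6)]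
    rfl
  have exists_a₂₁_iff (c : ℤ) : (∃ y, 12 ∣ c + 6 * y * b) ↔ 6 ∣ c :=
    Int.exists_two_mul_dvd_add_mul_odd_iff hb 6 c
  ext d
  simp only [Set.mem_ofPred_eq, twelve_div, ← exists_dvd_and_dvd_and_mul_eq_iff,
    Int.ediv_gcd_dvd_iff_dvd_mul (by norm_num : (6 : ℤ) ≠ 0), Int.two_dvd_mul_odd_iff hb,
    ← exists_a₂₁_iff, mul_comm a, exists_and_left, exists_and_right]
end

section
/- Let a, b be integers with b even. Then the set {d : ℤ | ∃ a₁₁ a₂₁ a₂₂ : ℤ, 12 ∣ (a₁₁·a + 6·a₂₁·b) ∧ 2 ∣ (a₂₂·b) ∧ a₁₁·a₂₂ = d} equals the set of all integer multiples of 12 / gcd(a, 12) (note gcd(a,12) divides 12, so 12/gcd(a,12) is an exact integer quotient). -/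
/-! Since `b` is even, the term `6 * a₂₁ * b` is a multiple of `12` and the second condition
always holds, so the only constraint is `12 ∣ a₁₁ * a`, i.e. `12 / gcd(a, 12) ∣ a₁₁`.
Every multiple of `a₁₁` is then realised by choosing `a₂₂`. -/

theorem Int.ediv_gcd_dvd_iff_dvd_mul_s4 {n : ℤ} (hn : n ≠ 0) (a x : ℤ) :
    n / (Int.gcd a n : ℤ) ∣ x ↔ n ∣ x * a := by
  have hg : (Int.gcd a n : ℤ) ≠ 0 := by exact_mod_cast Int.gcd_ne_zero_right hn
  rw [Int.ediv_dvd_iff_dvd_mul (Int.gcd_dvd_right a n) hg, Int.coe_gcd, _root_.gcd_comm,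
    _root_.dvd_gcd_mul_iff_dvd_mul, mul_comm]

theorem Int.twelve_dvd_six_mul_mul_of_even {b : ℤ} (hb : Even b) (y : ℤ) : 12 ∣ 6 * y * b := by
  obtain ⟨c, rfl⟩ := hb
  exact ⟨y * c, by ring⟩

theorem degrees_to_product_b_even (a b : ℤ) (hb : Even b) :
    {d : ℤ | ∃ a₁₁ a₂₁ a₂₂ : ℤ,
        (12 : ℤ) ∣ (a₁₁ * a + 6 * a₂₁ * b) ∧ (2 : ℤ) ∣ (a₂₂ * b) ∧ a₁₁ * a₂₂ = d}
      = {d : ℤ | ((12 / (Int.gcd a 12 : ℤ))) ∣ d} := by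
  have first_condition_iff (a₁₁ a₂₁ : ℤ) :
      12 ∣ a₁₁ * a + 6 * a₂₁ * b ↔ 12 / (Int.gcd a 12 : ℤ) ∣ a₁₁ := by
    rw [dvd_add_left (Int.twelve_dvd_six_mul_mul_of_even hb a₂₁),
      Int.ediv_gcd_dvd_iff_dvd_mul_s4 (by norm_num)]
  ext d
  constructor
  · rintro ⟨a₁₁, a₂₁, a₂₂, h₁, -, rfl⟩
    exact ((first_condition_iff a₁₁ a₂₁).mp h₁).mul_right a₂₂
  · rintro ⟨m, rfl⟩
    exact ⟨_, 0, m, (first_condition_iff _ 0).mpr dvd_rfl,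
      dvd_mul_of_dvd_right hb.two_dvd m, rfl⟩
end

section
/- The set {d : ℤ | ∃ a₁₁ a₂₁ a₂₂ : ℤ, 12 ∣ (a₁₁ + 6·a₂₁ − d) ∧ 2 ∣ (a₂₂ − d) ∧ a₁₁·a₂₂ = d} equals the set {d : ℤ | ¬(4 ∣ (d − 2))}, i.e. the set of integers d with d ≢ 2 (mod 4). -/
/-! Since `a₁₁ + 6 a₂₁` runs over the residues of `a₁₁` modulo 6, the system only asks for a
factorisation `d = a * b` with `a ≡ d (mod 6)` and `b ≡ d (mod 2)`. When `d` is even both factors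
are even, so `4 ∣ d`; conversely an odd `d` is `d * 1`, and `d = 4k` is `(2u)(2v)` with
`u ∈ {k, 1, -1}` chosen according to `k mod 3`. -/

theorem exists_dvd_add_six_mul_sub_iff (a d : ℤ) :
    (∃ c : ℤ, 12 ∣ a + 6 * c - d) ↔ 6 ∣ a - d := by
  constructor
  · rintro ⟨c, hc⟩
    omega
  · rintro ⟨m, hm⟩
    exact ⟨-m, ⟨0, by linear_combination hm⟩⟩

theorem not_four_dvd_sub_two_of_mul_eq {a b d : ℤ} (ha : 2 ∣ a - d) (hb : 2 ∣ b - d)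
    (hab : a * b = d) : ¬ 4 ∣ d - 2 := by
  intro hd
  have h4 : (4 : ℤ) ∣ d := by
    rw [← hab, show (4 : ℤ) = 2 * 2 by norm_num]
    exact mul_dvd_mul (by omega) (by omega)
  omega

theorem exists_mul_eq_four_mul (k : ℤ) :
    ∃ a b : ℤ, 6 ∣ a - 4 * k ∧ 2 ∣ b - 4 * k ∧ a * b = 4 * k := by
  rcases (by omega : k % 3 = 0 ∨ k % 3 = 1 ∨ k % 3 = 2) with hk | hk | hk
  · exact ⟨2 * k, 2, by omega, by omega, by ring⟩
  · exact ⟨-2, -2 * k, by omega, by omega, by ring⟩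
  · exact ⟨2, 2 * k, by omega, by omega, by ring⟩

theorem exists_mul_eq_of_not_four_dvd_sub_two {d : ℤ} (hd : ¬ 4 ∣ d - 2) :
    ∃ a b : ℤ, 6 ∣ a - d ∧ 2 ∣ b - d ∧ a * b = d := by
  rcases Int.even_or_odd d with ⟨k, hk⟩ | ⟨m, rfl⟩
  · obtain ⟨l, rfl⟩ : ∃ l, d = 4 * l := ⟨d / 4, by omega⟩
    exact exists_mul_eq_four_mul l
  · exact ⟨2 * m + 1, 1, ⟨0, by ring⟩, ⟨-m, by ring⟩, mul_one _⟩

theorem self_degrees_case1b :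
    {d : ℤ | ∃ a₁₁ a₂₁ a₂₂ : ℤ,
        (12 : ℤ) ∣ (a₁₁ + 6 * a₂₁ - d) ∧ (2 : ℤ) ∣ (a₂₂ - d) ∧ a₁₁ * a₂₂ = d}
      = {d : ℤ | ¬ ((4 : ℤ) ∣ (d - 2))} := by
  ext d
  simp only [Set.mem_ofPred_eq]
  constructor
  · rintro ⟨a, c, b, hac, hb, hab⟩
    have ha : 6 ∣ a - d := (exists_dvd_add_six_mul_sub_iff a d).mp ⟨c, hac⟩
    exact not_four_dvd_sub_two_of_mul_eq (dvd_trans (by norm_num) ha) hb hab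
  · intro hd
    obtain ⟨a, b, ha, hb, hab⟩ := exists_mul_eq_of_not_four_dvd_sub_two hd
    obtain ⟨c, hac⟩ := (exists_dvd_add_six_mul_sub_iff a d).mpr ha
    exact ⟨a, c, b, hac, hb, hab⟩
end

section
/- Let G and H be additive commutative groups, let ε, x ∈ G with ε of additive order 2, let t₀ ≥ 1 be a natural number such that t₀ • x = ε and the additive order of x equals 2·t₀, and let y ∈ H. Then the set {d : ℤ | (∃ u : ℤ, u • ε = d • x) ∧ d • y = 0} equals the set of all integer multiples of lcm(t₀, addOrderOf y) (cast to ℤ). -/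
/-! Since `addOrderOf x = 2 * t₀`, the multiples of `ε = t₀ • x` inside `⟨x⟩` are exactly the
`d • x` with `t₀ ∣ d`, and `d • y = 0` means `addOrderOf y ∣ d`; both together say
`lcm t₀ (addOrderOf y) ∣ d`. -/

theorem exists_zsmul_nsmul_eq_zsmul_iff {G : Type*} [AddGroup G] {x : G} {t : ℕ}
    (ht : t ∣ addOrderOf x) {d : ℤ} : (∃ u : ℤ, u • t • x = d • x) ↔ (t : ℤ) ∣ d := by
  constructor
  · rintro ⟨u, hu⟩
    have hdiff : (addOrderOf x : ℤ) ∣ d - u * t := by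
      rw [addOrderOf_dvd_iff_zsmul_eq_zero, sub_zsmul, mul_zsmul, natCast_zsmul, hu, add_neg_cancel]
    exact (dvd_sub_left (dvd_mul_left _ _)).1 ((Int.natCast_dvd_natCast.2 ht).trans hdiff)
  · rintro ⟨c, rfl⟩
    exact ⟨c, by rw [mul_comm, mul_zsmul, natCast_zsmul]⟩

theorem degrees_connected_sum_case_b_general
    {G H : Type*} [AddCommGroup G] [AddCommGroup H]
    (ε x : G)
    (t₀ : ℕ) (hx : t₀ • x = ε) (hord : addOrderOf x = 2 * t₀)
    (y : H) :
    {d : ℤ | (∃ u : ℤ, u • ε = d • x) ∧ d • y = 0}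
      = {d : ℤ | ((Nat.lcm t₀ (addOrderOf y) : ℤ)) ∣ d} := by
  ext d
  rw [Set.mem_ofPred_eq, Set.mem_ofPred_eq, ← hx,
    exists_zsmul_nsmul_eq_zsmul_iff (hord ▸ dvd_mul_left t₀ 2), ← addOrderOf_dvd_iff_zsmul_eq_zero,
    ← Int.lcm_natCast_natCast, Int.coe_lcm_dvd_iff]

theorem degrees_connected_sum_case_b
    {G H : Type*} [AddCommGroup G] [AddCommGroup H]
    (ε x : G) (hε : addOrderOf ε = 2)
    (t₀ : ℕ) (ht₀ : 1 ≤ t₀) (hx : t₀ • x = ε) (hord : addOrderOf x = 2 * t₀)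
    (y : H) :
    {d : ℤ | (∃ u : ℤ, u • ε = d • x) ∧ d • y = 0}
      = {d : ℤ | ((Nat.lcm t₀ (addOrderOf y) : ℤ)) ∣ d} :=
  degrees_connected_sum_case_b_general ε x t₀ hx hord y
end

section
/- Define a relation R on ℤ × ℤ × ℤ by: (a, b, c) R (A, B, C) if and only if there exist integers d, a₁₁, a₂₁, a₂₂, m with (d = 1 ∨ d = −1), a₁₁·a₂₂ = d, 2·m = a₁₁·(a₁₁ − 1), 2 ∣ (a₁₁·a − d·A), 2 ∣ (a₁₁·b + a₂₁·c + m·a + a₁₁·a₂₁ − d·B), and 24 ∣ (a₂₂·c − d·C). Then for every triple (a, b, c) ∈ ℤ³ there is exactly one triple (A, B, C) in the 38-element set L = {(A, 0, C) | A ∈ {0,1}, C ∈ {0,2,4,6,8,10,12}} ∪ {(A, B, C) | A ∈ {0,1}, B ∈ {0,1}, C ∈ {1,3,5,7,9,11}} such that (a, b, c) R (A, B, C). -/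
/-- The relation encoding homotopy equivalence of rank-1 Poincaré complexes in 𝒥₅
with attaching-map invariants `(a, b, c)` and `(A, B, C)`. -/
def HtpyEquivJ5 (a b c A B C : ℤ) : Prop :=
  ∃ d a₁₁ a₂₁ a₂₂ m : ℤ, (d = 1 ∨ d = -1) ∧ a₁₁ * a₂₂ = d ∧
    2 * m = a₁₁ * (a₁₁ - 1) ∧
    (2 : ℤ) ∣ (a₁₁ * a - d * A) ∧
    (2 : ℤ) ∣ (a₁₁ * b + a₂₁ * c + m * a + a₁₁ * a₂₁ - d * B) ∧
    (24 : ℤ) ∣ (a₂₂ * c - d * C)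


/-!
Since `a₁₁ a₂₂ = d = ±1`, we have `a₁₁ = ±1`, `a₂₂ = d a₁₁` and `m ∈ {0, 1}`, and the sign `d`
disappears from every congruence. So `(a, b, c)` and `(A, B, C)` are related exactly when
`A ≡ a (mod 2)`, `C ≡ a₁₁ c (mod 24)` and `B ≡ b + m a + a₂₁ (c + 1) (mod 2)`: for even `c` the
free choice of `a₂₁` makes `B` arbitrary, while for odd `c` the sign `a₁₁` is forced by `C` (as
`c ≢ -c (mod 24)`) and then `B ≡ b` or `B ≡ b + a`. Reducing `c` to a representative of `±c` in
`[0, 12]` leaves exactly one triple of `L` in each class.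
-/

theorem exists_two_dvd_add_mul_add_one_iff (x c : ℤ) :
    (∃ e : ℤ, 2 ∣ x + e * (c + 1)) ↔ 2 ∣ c ∨ 2 ∣ x := by
  constructor
  · rintro ⟨e, he⟩
    rcases Int.even_or_odd c with hc | hc
    · exact .inl hc.two_dvd
    · exact .inr <| (Int.dvd_add_left (dvd_mul_of_dvd_right hc.add_one.two_dvd e)).mp he
  · rintro (⟨k, rfl⟩ | hx)
    · exact ⟨x, x * (k + 1), by ring⟩
    · exact ⟨0, by simpa using hx⟩

theorem htpyEquivJ5_iff {a b c A B C : ℤ} :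
    HtpyEquivJ5 a b c A B C ↔ 2 ∣ a - A ∧
      ((24 ∣ c - C ∧ (2 ∣ c ∨ 2 ∣ b - B)) ∨ (24 ∣ c + C ∧ (2 ∣ c ∨ 2 ∣ b + a - B))) := by
  simp only [← exists_two_dvd_add_mul_add_one_iff, mul_add_one]
  constructor
  · rintro ⟨d, a₁₁, a₂₁, a₂₂, m, hd, hunit, hm, hA, hB, hC⟩
    have ha₁₁ : a₁₁ = 1 ∨ a₁₁ = -1 :=
      Int.isUnit_iff.mp (isUnit_of_mul_isUnit_left (hunit ▸ Int.isUnit_iff.mpr hd))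
    obtain rfl : a₂₂ = d * a₁₁ := by rcases ha₁₁ with rfl | rfl <;> linarith
    rcases ha₁₁ with rfl | rfl
    · obtain rfl : m = 0 := by omega
      rcases hd with rfl | rfl <;> refine ⟨?_, .inl ⟨?_, a₂₁, ?_⟩⟩ <;> omega
    · obtain rfl : m = 1 := by omega
      rcases hd with rfl | rfl <;> refine ⟨?_, .inr ⟨?_, a₂₁, ?_⟩⟩ <;> omega
  · rintro ⟨hA, ⟨hC, e, hB⟩ | ⟨hC, e, hB⟩⟩
    · refine ⟨1, 1, e, 1, 0, .inl rfl, rfl, rfl, ?_, ?_, ?_⟩ <;> omega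
    · refine ⟨1, -1, e, -1, 1, .inl rfl, rfl, rfl, ?_, ?_, ?_⟩ <;> omega

def representativesJ5 : Set (ℤ × ℤ × ℤ) :=
  {q : ℤ × ℤ × ℤ |
    (q.1 ∈ ({0, 1} : Set ℤ) ∧ q.2.1 = 0 ∧ q.2.2 ∈ ({0, 2, 4, 6, 8, 10, 12} : Set ℤ)) ∨
    (q.1 ∈ ({0, 1} : Set ℤ) ∧ q.2.1 ∈ ({0, 1} : Set ℤ) ∧
      q.2.2 ∈ ({1, 3, 5, 7, 9, 11} : Set ℤ))}

theorem mem_representativesJ5_iff {A B C : ℤ} :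
    (A, B, C) ∈ representativesJ5 ↔
      0 ≤ A ∧ A ≤ 1 ∧ 0 ≤ C ∧ C ≤ 12 ∧ (2 ∣ C ∧ B = 0 ∨ ¬2 ∣ C ∧ 0 ≤ B ∧ B ≤ 1) := by
  simp only [representativesJ5, Set.mem_ofPred_eq, Set.mem_insert_iff, Set.mem_singleton_iff]
  omega

theorem exists_mem_representativesJ5_htpyEquivJ5 (a b c : ℤ) :
    ∃ p ∈ representativesJ5, HtpyEquivJ5 a b c p.1 p.2.1 p.2.2 := by
  by_cases hc : c % 24 ≤ 12
  · refine ⟨(a % 2, if 2 ∣ c then 0 else b % 2, c % 24), ?_, ?_⟩ <;>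
      simp only [mem_representativesJ5_iff, htpyEquivJ5_iff] <;> split_ifs <;> omega
  · refine ⟨(a % 2, if 2 ∣ c then 0 else (b + a) % 2, 24 - c % 24), ?_, ?_⟩ <;>
      simp only [mem_representativesJ5_iff, htpyEquivJ5_iff] <;> split_ifs <;> omega

theorem eq_of_htpyEquivJ5_of_mem_representativesJ5 {a b c : ℤ} {p q : ℤ × ℤ × ℤ}
    (hp : p ∈ representativesJ5) (hq : q ∈ representativesJ5)
    (hpr : HtpyEquivJ5 a b c p.1 p.2.1 p.2.2) (hqr : HtpyEquivJ5 a b c q.1 q.2.1 q.2.2) :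
    p = q := by
  obtain ⟨A, B, C⟩ := p
  obtain ⟨A', B', C'⟩ := q
  rw [mem_representativesJ5_iff] at hp hq
  simp only [htpyEquivJ5_iff] at hpr hqr
  simp only [Prod.mk.injEq]
  omega

theorem thirtyeight_homotopy_types_J5 (a b c : ℤ) :
    ∃! p : ℤ × ℤ × ℤ,
      p ∈ ({q : ℤ × ℤ × ℤ |
              (q.1 ∈ ({0, 1} : Set ℤ) ∧ q.2.1 = 0 ∧
                q.2.2 ∈ ({0, 2, 4, 6, 8, 10, 12} : Set ℤ)) ∨
              (q.1 ∈ ({0, 1} : Set ℤ) ∧ q.2.1 ∈ ({0, 1} : Set ℤ) ∧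
                q.2.2 ∈ ({1, 3, 5, 7, 9, 11} : Set ℤ))} : Set (ℤ × ℤ × ℤ)) ∧
      HtpyEquivJ5 a b c p.1 p.2.1 p.2.2 := by
  obtain ⟨p, hp, hpr⟩ := exists_mem_representativesJ5_htpyEquivJ5 a b c
  exact ⟨p, ⟨hp, hpr⟩, fun q ⟨hq, hqr⟩ => eq_of_htpyEquivJ5_of_mem_representativesJ5 hq hp hqr hpr⟩
end
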